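/- For each t ∈ ℤ≥0, ⟨[(P^(k))^t]_0, d^(k)⟩ ≤ ⟨[(P^(k+1))^t]_0, d^(k+1)⟩ and ⟨[(P^(k))^t]_0, 𝟏_{2k-1}⟩ ≤ ⟨[(P^(k+1))^t]_0, 𝟏_{2k+1}⟩, with strict inequality for t large enough. Here [A]_0 is row 0 of A. -/

import Mathlib

/-- Restriction of the Toeplitz matrix `P(i,j) = p(|i-j|)` to
`S^(k) = {-(k-1), …, k-1}`, indexed by `Fin (2k-1)` (index `i` corresponds to
the integer `i - (k-1)`). -/
def Prestrict (p : ℕ → ℝ) (k : ℕ) : Matrix (Fin (2 * k - 1)) (Fin (2 * k - 1)) ℝ :=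
  fun i j => p ((i.val : ℤ) - (j.val : ℤ)).natAbs

/-- Row 0 (the center row) of `(P^(k))^t` paired with the vector
`(d(e))_{e ∈ S^(k)}`. -/
noncomputable def rowPair (p : ℕ → ℝ) (d : ℤ → ℝ) (k t : ℕ) (hk : 1 ≤ k) : ℝ :=
  ∑ j : Fin (2 * k - 1),
    ((Prestrict p k) ^ t) ⟨k - 1, by omega⟩ j * d ((j.val : ℤ) - ((k : ℤ) - 1))

/-!
`P^(k)` is the principal submatrix of `P^(k+1)` on the inner indices `S^(k) ⊆ S^(k+1)`. Since
all entries are nonnegative, the powers of a principal submatrix are entrywise dominated by the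
corresponding entries of the powers of the big matrix (walks inside the small window are walks
in the big one). Hence for any nonnegative weight `w` (here `d` or `𝟏`) the pairing grows with
`k`, by at least the new term `[(P^(k+1))^t]_{0,k} · w(k)`. Because `p 0 ≥ p 1 > 0`, a walk may
stay put or move by one step, so this entry is positive as soon as `t ≥ k`.
-/

open Finset

theorem Finset.sum_comp_embedding_add_le {ι κ R : Type*} [Fintype ι] [Fintype κ]
    [AddCommMonoid R] [PartialOrder R] [IsOrderedAddMonoid R]
    {f : κ → R} (hf : ∀ j, 0 ≤ f j) (e : ι ↪ κ) {j₀ : κ} (hj₀ : j₀ ∉ Set.range e) :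
    ∑ i, f (e i) + f j₀ ≤ ∑ j, f j := by
  have hj₀' : j₀ ∉ univ.map e := by simpa using hj₀
  rw [← sum_map univ e f, add_comm, ← sum_cons hj₀']
  exact sum_le_univ_sum_of_nonneg hf

namespace Matrix

variable {ι κ R : Type*} [Fintype ι] [Fintype κ] [DecidableEq ι] [DecidableEq κ]
  [Semiring R] [PartialOrder R] [IsOrderedRing R]

theorem submatrix_pow_apply_le {B : Matrix κ κ R} (hB : ∀ i j, 0 ≤ B i j) (e : ι ↪ κ)
    (t : ℕ) (i j : ι) : ((B.submatrix e e) ^ t) i j ≤ (B ^ t) (e i) (e j) := by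
  induction t generalizing j with
  | zero => simp [one_apply]
  | succ t ih =>
    rw [pow_succ, pow_succ, mul_apply, mul_apply]
    calc ∑ m, ((B.submatrix e e) ^ t) i m * B (e m) (e j)
        ≤ ∑ m, (B ^ t) (e i) (e m) * B (e m) (e j) :=
          sum_le_sum fun m _ => mul_le_mul_of_nonneg_right (ih m) (hB _ _)
      _ ≤ ∑ m', (B ^ t) (e i) m' * B m' (e j) := by
          rw [← sum_map univ e fun m' => (B ^ t) (e i) m' * B m' (e j)]
          exact sum_le_univ_sum_of_nonneg fun m' => mul_nonneg (pow_apply_nonneg hB _ _ _) (hB _ _)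

theorem pow_succ_apply_pos [PosMulStrictMono R] {A : Matrix ι ι R} (hA : ∀ i j, 0 ≤ A i j)
    {t : ℕ} {i m j : ι} (him : 0 < (A ^ t) i m) (hmj : 0 < A m j) : 0 < (A ^ (t + 1)) i j := by
  rw [pow_succ, mul_apply]
  exact (mul_pos him hmj).trans_le <| single_le_sum
    (f := fun l => (A ^ t) i l * A l j) (fun l _ => mul_nonneg (pow_apply_nonneg hA _ _ _) (hA _ _))
    (mem_univ m)

end Matrix

namespace Prestrict

variable {p : ℕ → ℝ}

def shiftEmb (k : ℕ) : Fin (2 * k - 1) ↪ Fin (2 * (k + 1) - 1) where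
  toFun i := ⟨i + 1, by omega⟩
  inj' a b h := Fin.ext (by simpa using congrArg Fin.val h)

@[simp]
theorem val_shiftEmb {k : ℕ} (i : Fin (2 * k - 1)) : (shiftEmb k i : ℕ) = i + 1 :=
  rfl

theorem eq_submatrix_shiftEmb (p : ℕ → ℝ) (k : ℕ) :
    Prestrict p k = (Prestrict p (k + 1)).submatrix (shiftEmb k) (shiftEmb k) := by
  ext i j
  simp only [Prestrict, Matrix.submatrix_apply, val_shiftEmb]
  congr 1
  omega

theorem apply_nonneg (hp0 : ∀ n, 0 ≤ p n) (k : ℕ) (i j : Fin (2 * k - 1)) :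
    0 ≤ Prestrict p k i j :=
  hp0 _

theorem pow_apply_pos (hp0 : ∀ n, 0 ≤ p n) (hp0pos : 0 < p 0) (hp1 : 0 < p 1) {k : ℕ} :
    ∀ {t : ℕ} {i j : Fin (2 * k - 1)}, ((i : ℤ) - j).natAbs ≤ t → 0 < (Prestrict p k ^ t) i j
  | 0, i, j, h => by
    obtain rfl : i = j := Fin.ext (by omega)
    simp
  | t + 1, i, j, h => by
    -- step from `j` one place towards `i` (or stay if `i = j`)
    obtain ⟨m, him, hmj⟩ : ∃ m : Fin (2 * k - 1), ((i : ℤ) - m).natAbs ≤ t ∧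
        ((m : ℤ) - j).natAbs ≤ 1 := by
      rcases lt_trichotomy (i : ℕ) j with hij | hij | hij
      · exact ⟨⟨j - 1, by omega⟩, by dsimp only; omega, by dsimp only; omega⟩
      · exact ⟨j, by omega, by omega⟩
      · exact ⟨⟨j + 1, by omega⟩, by dsimp only; omega, by dsimp only; omega⟩
    refine Matrix.pow_succ_apply_pos (apply_nonneg hp0 k) (pow_apply_pos hp0 hp0pos hp1 him) ?_
    rcases Nat.le_one_iff_eq_zero_or_eq_one.mp hmj with h0 | h1
    · simpa only [Prestrict, h0] using hp0pos
    · simpa only [Prestrict, h1] using hp1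

end Prestrict

namespace rowPair

open Prestrict

variable {p : ℕ → ℝ} {w : ℤ → ℝ} {k : ℕ}

theorem add_le_succ (hp0 : ∀ n, 0 ≤ p n) (hw : ∀ e, 0 ≤ w e) (t : ℕ) (hk : 1 ≤ k) :
    rowPair p w k t hk + (Prestrict p (k + 1) ^ t) ⟨k, by omega⟩ ⟨2 * k, by omega⟩ * w k ≤
      rowPair p w (k + 1) t (Nat.le_add_left 1 k) := by
  set f : Fin (2 * (k + 1) - 1) → ℝ := fun j =>
    (Prestrict p (k + 1) ^ t) ⟨k, by omega⟩ j * w ((j : ℤ) - ((k + 1 : ℕ) - 1 : ℤ))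
  have hf : ∀ j, 0 ≤ f j := fun j =>
    mul_nonneg (Matrix.pow_apply_nonneg (apply_nonneg hp0 _) _ _ _) (hw _)
  have hcenter : shiftEmb k ⟨k - 1, by omega⟩ = ⟨k, by omega⟩ :=
    Fin.ext (show k - 1 + 1 = k by omega)
  have hinner : rowPair p w k t hk ≤ ∑ j, f (shiftEmb k j) := by
    refine sum_le_sum fun j _ => ?_
    have hwj : ((shiftEmb k j : ℕ) : ℤ) - ((k + 1 : ℕ) - 1 : ℤ) = (j : ℤ) - ((k : ℤ) - 1) := by
      simp only [val_shiftEmb]; push_cast; ring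
    simp only [f, hwj, ← hcenter]
    rw [eq_submatrix_shiftEmb p k]
    exact mul_le_mul_of_nonneg_right
      (Matrix.submatrix_pow_apply_le (apply_nonneg hp0 _) _ _ _ _) (hw _)
  have hlast : f ⟨2 * k, by omega⟩ =
      (Prestrict p (k + 1) ^ t) ⟨k, by omega⟩ ⟨2 * k, by omega⟩ * w k := by
    simp only [f]
    congr 2
    push_cast
    ring
  have hnew : (⟨2 * k, by omega⟩ : Fin (2 * (k + 1) - 1)) ∉ Set.range (shiftEmb k) := by
    rintro ⟨j, hj⟩
    have := congrArg Fin.val hj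
    simp only [val_shiftEmb] at this
    omega
  calc rowPair p w k t hk + (Prestrict p (k + 1) ^ t) ⟨k, by omega⟩ ⟨2 * k, by omega⟩ * w k
      ≤ ∑ j, f (shiftEmb k j) + f ⟨2 * k, by omega⟩ := by rw [hlast]; gcongr
    _ ≤ ∑ j, f j := sum_comp_embedding_add_le hf _ hnew

theorem le_succ (hp0 : ∀ n, 0 ≤ p n) (hw : ∀ e, 0 ≤ w e) (t : ℕ) (hk : 1 ≤ k) :
    rowPair p w k t hk ≤ rowPair p w (k + 1) t (Nat.le_add_left 1 k) :=
  (le_add_of_nonneg_right (mul_nonneg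
    (Matrix.pow_apply_nonneg (apply_nonneg hp0 _) _ _ _) (hw _))).trans (add_le_succ hp0 hw t hk)

theorem lt_succ (hp0 : ∀ n, 0 ≤ p n) (hp0pos : 0 < p 0) (hp1 : 0 < p 1) (hw : ∀ e, 0 ≤ w e)
    (hwk : 0 < w k) {t : ℕ} (ht : k ≤ t) (hk : 1 ≤ k) :
    rowPair p w k t hk < rowPair p w (k + 1) t (Nat.le_add_left 1 k) := by
  have hentry : 0 < (Prestrict p (k + 1) ^ t) ⟨k, by omega⟩ ⟨2 * k, by omega⟩ :=
    pow_apply_pos hp0 hp0pos hp1 (by simp only; omega)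
  exact (lt_add_of_pos_right _ (mul_pos hentry hwk)).trans_le (add_le_succ hp0 hw t hk)

end rowPair

/-- for each `t`, `⟨[(P^(k))^t]₀, d^(k)⟩ ≤ ⟨[(P^(k+1))^t]₀, d^(k+1)⟩`
and `⟨[(P^(k))^t]₀, 𝟏⟩ ≤ ⟨[(P^(k+1))^t]₀, 𝟏⟩`, with strict inequality for
`t` large enough. -/
theorem row_pairing_mono
    (p : ℕ → ℝ) (d : ℤ → ℝ) (k : ℕ)
    (hk : 1 ≤ k)
    (hp0 : ∀ n, 0 ≤ p n)
    (hpdec : ∀ n : ℕ, p (n + 1) ≤ p n)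
    (hp1 : 0 < p 1)
    (hd0 : ∀ e, 0 ≤ d e)
    (hdpos : ∀ e : ℤ, e ≠ 0 → 0 < d e) :
    (∀ t : ℕ,
      rowPair p d k t hk ≤ rowPair p d (k + 1) t (by omega) ∧
      rowPair p (fun _ => 1) k t hk ≤ rowPair p (fun _ => 1) (k + 1) t (by omega)) ∧
    (∃ T : ℕ, ∀ t : ℕ, T ≤ t →
      rowPair p d k t hk < rowPair p d (k + 1) t (by omega) ∧
      rowPair p (fun _ => 1) k t hk < rowPair p (fun _ => 1) (k + 1) t (by omega)) := by
  have hp0pos : 0 < p 0 := hp1.trans_le (hpdec 0)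
  have hone : ∀ _ : ℤ, (0 : ℝ) ≤ 1 := fun _ => zero_le_one
  have hdk : 0 < d k := hdpos k (by omega)
  exact ⟨fun t => ⟨rowPair.le_succ hp0 hd0 t hk, rowPair.le_succ hp0 hone t hk⟩,
    k, fun t ht => ⟨rowPair.lt_succ hp0 hp0pos hp1 hd0 hdk ht hk,
      rowPair.lt_succ hp0 hp0pos hp1 hone one_pos ht hk⟩⟩
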